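/- arXiv:1810.00865 — 2 statements merged into one kernel-verified Lean document; each statement's English description precedes it below -/
import Mathlib

section
/- Let T ≥ 2, b > 0, and define |Ψ⟩ = A Σ_{t=1}^T (b+1)^{-t}|t⟩ on ℂ^T with A² = b(2+b)/(1-(b+1)^{-2T}). With H_b = -b|1⟩⟨1| + L (L the path Laplacian), we have H_b|Ψ⟩ = -(b²/(b+1))|Ψ⟩ - (Ab/(b+1)^{T+1})|T⟩. -/
/-- The path-graph Laplacian on `ℂ^T`: `∑_{t=1}^{T-1} (|t⟩-|t+1⟩)(⟨t|-⟨t+1|)`,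
with sites indexed by `Fin T` (site `t` of the paper is index `t-1`). -/
noncomputable def pathLap (T : ℕ) : Matrix (Fin T) (Fin T) ℂ :=
  ∑ t ∈ Finset.range (T - 1),
    Matrix.vecMulVec
      (fun i : Fin T => (if (i : ℕ) = t then (1:ℂ) else 0) - (if (i : ℕ) = t + 1 then 1 else 0))
      (fun i : Fin T => (if (i : ℕ) = t then (1:ℂ) else 0) - (if (i : ℕ) = t + 1 then 1 else 0))

/-- `H_b = -b|1⟩⟨1| + pathLap` on `ℂ^T`. -/
noncomputable def Hb (T : ℕ) (b : ℝ) : Matrix (Fin T) (Fin T) ℂ :=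
  pathLap T - (b : ℂ) •
    Matrix.vecMulVec (fun i : Fin T => if (i : ℕ) = 0 then (1:ℂ) else 0)
      (fun i : Fin T => if (i : ℕ) = 0 then (1:ℂ) else 0)

/-- The geometric ansatz `|Ψ⟩ = A ∑_{t=1}^T (b+1)^{-t} |t⟩` (site `t` is index `t-1`). -/
noncomputable def ansatzA (T : ℕ) (b A : ℝ) : Fin T → ℂ :=
  fun t => (A : ℂ) * (((b + 1 : ℝ) : ℂ))⁻¹ ^ ((t : ℕ) + 1)

/-!
Write `r = (b+1)⁻¹` and `ψ_t = A r^t`. Away from the ends, `(Lψ)_t = (2 - r - r⁻¹) ψ_t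
= -(b²/(b+1)) ψ_t`. At the first site the missing neighbour contributes `ψ_0 - ψ_1 = -b ψ_1`,
which is exactly cancelled by the potential `-b|1⟩⟨1|`; at the last site it contributes
`ψ_{T+1} - ψ_T = -A b/(b+1)^{T+1}`, the boundary defect.
-/

open Finset Matrix

theorem indicator_dotProduct {R : Type*} [Semiring R] {T t : ℕ} (ht : t < T) (v : ℕ → R) :
    (fun i : Fin T => if (i : ℕ) = t then (1 : R) else 0) ⬝ᵥ (fun j => v j) = v t := by
  simp only [dotProduct, ite_mul, one_mul, zero_mul]
  rw [Fin.sum_univ_eq_sum_range (fun n => if n = t then v n else 0), sum_ite_eq']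
  simp [ht]

theorem sum_range_edge_mul {R : Type*} [Ring R] {N k : ℕ} (hk : k ≤ N) (d : ℕ → R) :
    ∑ t ∈ range N, ((if k = t then (1 : R) else 0) - if k = t + 1 then 1 else 0) * d t
      = (if k < N then d k else 0) - if k = 0 then 0 else d (k - 1) := by
  simp only [sub_mul, ite_mul, one_mul, zero_mul, sum_sub_distrib, sum_ite_eq, mem_range]
  congr 1
  rcases k with _ | k
  · simp
  · simp only [add_left_inj, sum_ite_eq, mem_range]
    simp [show k < N by omega]

theorem pathLap_mulVec_apply {T : ℕ} (v : ℕ → ℂ) (i : Fin T) :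
    (pathLap T *ᵥ fun j => v j) i
      = (if (i : ℕ) + 1 < T then v i - v (i + 1) else 0)
        - if (i : ℕ) = 0 then 0 else v (i - 1) - v i := by
  have edge_dot : ∀ t ∈ range (T - 1),
      (fun i : Fin T => (if (i : ℕ) = t then (1:ℂ) else 0) - if (i : ℕ) = t + 1 then 1 else 0)
        ⬝ᵥ (fun j => v j) = v t - v (t + 1) := fun t ht => by
    have ht : t + 1 < T := by have := mem_range.mp ht; omega
    simpa only [dotProduct, sub_mul, sum_sub_distrib] using
      congrArg₂ (· - ·) (indicator_dotProduct (by omega) v) (indicator_dotProduct ht v)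
  simp only [pathLap, sum_mulVec, vecMulVec_mulVec, Finset.sum_apply, Pi.smul_apply,
    MulOpposite.smul_eq_mul_unop, MulOpposite.unop_op]
  rw [sum_congr rfl fun t ht => by rw [edge_dot t ht], sum_range_edge_mul (by omega)]
  split_ifs <;> first | rfl | omega | (congr 3; omega)

theorem Hb_mulVec_apply {T : ℕ} (b : ℝ) (v : ℕ → ℂ) (i : Fin T) :
    (Hb T b *ᵥ fun j => v j) i
      = (pathLap T *ᵥ fun j => v j) i - if (i : ℕ) = 0 then (b : ℂ) * v 0 else 0 := by
  simp only [Hb, sub_mulVec, smul_mulVec, vecMulVec_mulVec, indicator_dotProduct i.pos,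
    Pi.sub_apply, Pi.smul_apply, smul_eq_mul, MulOpposite.smul_eq_mul_unop, MulOpposite.unop_op]
  rw [ite_mul, one_mul, zero_mul, mul_ite, mul_zero]

section GeomProfile

variable {K : Type*} [Field K]

def geomProfile (b A : K) (n : ℕ) : K := A * (b + 1)⁻¹ ^ (n + 1)

variable {b : K} (A : K)

theorem geomProfile_first_site (hb : b + 1 ≠ 0) :
    geomProfile b A 0 - geomProfile b A 1 - b * geomProfile b A 0
      = -(b ^ 2 / (b + 1)) * geomProfile b A 0 := by
  simp only [geomProfile, inv_pow]
  field_simp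
  ring

theorem geomProfile_bulk_site (hb : b + 1 ≠ 0) (n : ℕ) :
    (geomProfile b A (n + 1) - geomProfile b A (n + 2))
        - (geomProfile b A n - geomProfile b A (n + 1))
      = -(b ^ 2 / (b + 1)) * geomProfile b A (n + 1) := by
  simp only [geomProfile, inv_pow]
  field_simp
  ring

theorem geomProfile_last_site (hb : b + 1 ≠ 0) (n : ℕ) :
    -(geomProfile b A n - geomProfile b A (n + 1))
      = -(b ^ 2 / (b + 1)) * geomProfile b A (n + 1) - A * b / (b + 1) ^ (n + 3) := by
  simp only [geomProfile, inv_pow]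
  field_simp
  ring

end GeomProfile

/-- `H_b |Ψ⟩ = -(b²/(b+1)) |Ψ⟩ - (A b/(b+1)^{T+1}) |T⟩`. -/
theorem stmt2 (T : ℕ) (hT : 2 ≤ T) (b : ℝ) (hb : 0 < b) (A : ℝ) :
    (Hb T b).mulVec (ansatzA T b A)
      = ((-(b ^ 2 / (b + 1)) : ℝ) : ℂ) • ansatzA T b A
        - ((A * b / (b + 1) ^ (T + 1) : ℝ) : ℂ) •
            (Pi.single (⟨T - 1, by omega⟩ : Fin T) (1 : ℂ) : Fin T → ℂ) := by
  have hb' : (b : ℂ) + 1 ≠ 0 := by exact_mod_cast (show b + 1 ≠ 0 by positivity)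
  have hansatz : ansatzA T b A = fun j : Fin T => geomProfile (b : ℂ) A j := by
    ext j; simp [ansatzA, geomProfile]
  obtain ⟨n, rfl⟩ : ∃ n, T = n + 2 := ⟨T - 2, by omega⟩
  ext ⟨i, hi⟩
  rw [hansatz, Hb_mulVec_apply, pathLap_mulVec_apply]
  simp only [Pi.sub_apply, Pi.smul_apply, smul_eq_mul, Pi.single_apply, Fin.ext_iff]
  push_cast
  rcases i with _ | m
  · rw [if_pos (by omega), if_pos rfl, if_pos rfl, if_neg (by omega)]
    simpa only [sub_zero, mul_zero] using geomProfile_first_site (A : ℂ) hb'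
  obtain rfl | hm := eq_or_ne m n
  · rw [if_neg (by omega), if_neg (by omega), if_neg (by omega), if_pos rfl, Nat.add_sub_cancel]
    simpa only [zero_sub, sub_zero, mul_one] using geomProfile_last_site (A : ℂ) hb' m
  · rw [if_pos (by omega), if_neg (by omega), if_neg (by omega), if_neg (by omega),
      Nat.add_sub_cancel]
    simpa only [sub_zero, mul_zero] using geomProfile_bulk_site (A : ℂ) hb' m
end

section
/- Let T ≥ 2, b > 0 and |Ψ⟩ = A Σ_{t=1}^T (b+1)^{-t}|t⟩ with A² = b(2+b)/(1-(b+1)^{-2T}). Then |Ψ⟩ is a unit vector, 0 < A < b+1, and ⟨Ψ|H_b|Ψ⟩ = -b²/(b+1) - A²b/(b+1)^{2T+1}. -/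
/-!
The ansatz is real, so its energy is the quadratic form `∑ₜ (ψₜ - ψₜ₊₁)² - b ψ₁²`. Consecutive
amplitudes differ by the factor `(b+1)⁻¹`, so `ψₜ - ψₜ₊₁ = b/(b+1) · ψₜ`, and both the norm and the
energy reduce to the geometric sums `(y² - 1) ∑_{t=1}^{n} y^{-2t} = 1 - y^{-2n}` with `y = b + 1`,
which the choice of `A` turns into the closed forms. Since `T ≥ 2`, `(b+1)^{2T} > (b+1)²`, which
gives `A < b + 1`.
-/

open scoped Matrix

open Matrix Finset

theorem dotProduct_vecMulVec_mulVec {n R : Type*} [Fintype n] [CommSemiring R]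
    (x u v y : n → R) : x ⬝ᵥ vecMulVec u v *ᵥ y = (x ⬝ᵥ u) * (v ⬝ᵥ y) := by
  rw [vecMulVec_mulVec, op_smul_eq_smul, dotProduct_smul, smul_eq_mul, mul_comm]

theorem ite_val_eq_pi_single {R : Type*} [Zero R] [One R] {T t : ℕ} (ht : t < T) :
    (fun i : Fin T => if (i : ℕ) = t then (1 : R) else 0) = Pi.single ⟨t, ht⟩ 1 := by
  funext i
  simp [Pi.single_apply, Fin.ext_iff]

theorem star_dotProduct_Hb_mulVec {T : ℕ} (hT : 0 < T) (b : ℝ) (x : ℕ → ℂ) :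
    star (fun i : Fin T => x i) ⬝ᵥ Hb T b *ᵥ (fun i : Fin T => x i)
      = ((∑ t ∈ range (T - 1), ‖x t - x (t + 1)‖ ^ 2 - b * ‖x 0‖ ^ 2 : ℝ) : ℂ) := by
  rw [Hb, pathLap, sub_mulVec, dotProduct_sub, sum_mulVec, dotProduct_sum, smul_mulVec,
    dotProduct_smul, dotProduct_vecMulVec_mulVec, ite_val_eq_pi_single hT,
    dotProduct_single_one, single_one_dotProduct, smul_eq_mul]
  push_cast
  congr 1
  · refine sum_congr rfl fun t ht => ?_
    have ht1 : t + 1 < T := by rw [mem_range] at ht; omega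
    rw [dotProduct_vecMulVec_mulVec, ← Pi.sub_def, ite_val_eq_pi_single (by omega),
      ite_val_eq_pi_single ht1, dotProduct_sub, sub_dotProduct, dotProduct_single_one,
      dotProduct_single_one, single_one_dotProduct, single_one_dotProduct, ← Complex.conj_mul']
    simp
  · simp [Complex.conj_mul']

theorem sq_sub_one_mul_sum_sq_inv_pow {K : Type*} [Field K] {y : K} (hy : y ≠ 0) (n : ℕ) :
    (y ^ 2 - 1) * ∑ i ∈ range n, (y⁻¹ ^ (i + 1)) ^ 2 = 1 - (y ^ (2 * n))⁻¹ := by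
  induction n with
  | zero => simp
  | succ n ih =>
    rw [sum_range_succ, mul_add, ih, ← pow_mul, inv_pow, mul_comm (n + 1), mul_add, pow_add]
    field_simp
    ring

theorem ansatzA_eq_ofReal (T : ℕ) (b A : ℝ) :
    ansatzA T b A = fun i : Fin T => ((A * (b + 1)⁻¹ ^ ((i : ℕ) + 1) : ℝ) : ℂ) := by
  funext i
  push_cast [ansatzA]
  rfl

theorem sum_norm_sq_ansatzA (T : ℕ) (b A : ℝ) :
    ∑ i : Fin T, ‖ansatzA T b A i‖ ^ 2 = A ^ 2 * ∑ i ∈ range T, ((b + 1)⁻¹ ^ (i + 1)) ^ 2 := by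
  rw [ansatzA_eq_ofReal, mul_sum, ← Fin.sum_univ_eq_sum_range]
  simp only [Complex.norm_real, Real.norm_eq_abs, sq_abs, mul_pow]

theorem star_dotProduct_Hb_mulVec_ansatzA {T : ℕ} (hT : 0 < T) {b : ℝ} (hb : b + 1 ≠ 0)
    (A : ℝ) :
    star (ansatzA T b A) ⬝ᵥ Hb T b *ᵥ ansatzA T b A
      = (((A * (b / (b + 1))) ^ 2 * ∑ t ∈ range (T - 1), ((b + 1)⁻¹ ^ (t + 1)) ^ 2
          - b * (A * (b + 1)⁻¹) ^ 2 : ℝ) : ℂ) := by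
  rw [ansatzA_eq_ofReal,
    star_dotProduct_Hb_mulVec hT b (fun n => ((A * (b + 1)⁻¹ ^ (n + 1) : ℝ) : ℂ))]
  have step : ∀ t : ℕ, A * (b + 1)⁻¹ ^ (t + 1) - A * (b + 1)⁻¹ ^ (t + 1 + 1)
      = A * (b / (b + 1)) * (b + 1)⁻¹ ^ (t + 1) := by
    intro t
    rw [show b / (b + 1) = 1 - (b + 1)⁻¹ by field_simp; ring]
    ring
  congr 1
  simp only [← Complex.ofReal_sub, Complex.norm_real, Real.norm_eq_abs, sq_abs, step, mul_pow,
    mul_sum, zero_add, pow_one]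

theorem one_sub_inv_pow_pos {y : ℝ} (hy : 1 < y) {n : ℕ} (hn : n ≠ 0) : 0 < 1 - (y ^ n)⁻¹ :=
  sub_pos.mpr (inv_lt_one_of_one_lt₀ (one_lt_pow₀ hy hn))

theorem sq_mul_one_sub_inv_pow_of_eq_sqrt {T : ℕ} (hT : 0 < T) {b A : ℝ} (hb : 0 < b)
    (hA : A = Real.sqrt (b * (2 + b) / (1 - ((b + 1 : ℝ) ^ (2 * T))⁻¹))) :
    A ^ 2 * (1 - ((b + 1) ^ (2 * T))⁻¹) = b * (2 + b) := by
  have hN := one_sub_inv_pow_pos (show 1 < b + 1 by linarith) (show 2 * T ≠ 0 by omega)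
  rw [hA, Real.sq_sqrt (by positivity), div_mul_cancel₀ _ hN.ne']

theorem sqrt_lt_add_one_of_two_le {T : ℕ} (hT : 2 ≤ T) {b : ℝ} (hb : 0 < b) :
    Real.sqrt (b * (2 + b) / (1 - ((b + 1 : ℝ) ^ (2 * T))⁻¹)) < b + 1 := by
  have hb1 : 1 < b + 1 := by linarith
  have hP : (b + 1) ^ 2 < (b + 1) ^ (2 * T) := pow_lt_pow_right₀ hb1 (by omega)
  have hP' : (b + 1) ^ 2 * ((b + 1) ^ (2 * T))⁻¹ < 1 := by
    rw [← div_eq_mul_inv, div_lt_one (by positivity)]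
    exact hP
  rw [Real.sqrt_lt' (by positivity), div_lt_iff₀ (one_sub_inv_pow_pos hb1 (by omega))]
  nlinarith

theorem sq_mul_sum_sq_inv_pow_eq_one {T : ℕ} {b A : ℝ} (hb : 0 < b)
    (hA : A ^ 2 * (1 - ((b + 1) ^ (2 * T))⁻¹) = b * (2 + b)) :
    A ^ 2 * ∑ i ∈ range T, ((b + 1)⁻¹ ^ (i + 1)) ^ 2 = 1 := by
  have hS := sq_sub_one_mul_sum_sq_inv_pow (show b + 1 ≠ 0 by positivity) T
  rw [← hS, show (b + 1) ^ 2 - 1 = b * (2 + b) by ring] at hA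
  have hb2 : b * (2 + b) ≠ 0 := by positivity
  apply mul_left_cancel₀ hb2
  linear_combination hA

theorem energy_eq_closed_form {T : ℕ} (hT : 0 < T) {b A : ℝ} (hb : 0 < b)
    (hA : A ^ 2 * (1 - ((b + 1) ^ (2 * T))⁻¹) = b * (2 + b)) :
    (A * (b / (b + 1))) ^ 2 * ∑ t ∈ range (T - 1), ((b + 1)⁻¹ ^ (t + 1)) ^ 2
        - b * (A * (b + 1)⁻¹) ^ 2
      = -(b ^ 2 / (b + 1)) - A ^ 2 * b / (b + 1) ^ (2 * T + 1) := by
  obtain ⟨k, rfl⟩ : ∃ k, T = k + 1 := ⟨T - 1, by omega⟩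
  have hS : ∑ i ∈ range k, ((b + 1)⁻¹ ^ (i + 1)) ^ 2
      = (1 - ((b + 1) ^ (2 * k))⁻¹) / (b * (b + 2)) := by
    rw [eq_div_iff (by positivity), mul_comm, show b * (b + 2) = (b + 1) ^ 2 - 1 by ring]
    exact sq_sub_one_mul_sum_sq_inv_pow (by positivity) k
  rw [add_tsub_cancel_right, hS,
    show (b + 1) ^ (2 * (k + 1) + 1) = (b + 1) ^ (2 * k) * (b + 1) ^ 3 by ring]
  rw [show (b + 1) ^ (2 * (k + 1)) = (b + 1) ^ (2 * k) * (b + 1) ^ 2 by ring] at hA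
  have hQ : (b + 1) ^ (2 * k) ≠ 0 := by positivity
  field_simp at hA ⊢
  linear_combination -hA

/-- `|Ψ⟩` is a unit vector, `0 < A < b+1`, and
`⟨Ψ|H_b|Ψ⟩ = -b²/(b+1) - A²b/(b+1)^{2T+1}`. -/
theorem stmt3 (T : ℕ) (hT : 2 ≤ T) (b : ℝ) (hb : 0 < b) (A : ℝ)
    (hA : A = Real.sqrt (b * (2 + b) / (1 - ((b + 1 : ℝ) ^ (2 * T))⁻¹))) :
    (∑ i : Fin T, ‖ansatzA T b A i‖ ^ 2 = 1) ∧
    (0 < A ∧ A < b + 1) ∧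
    star (ansatzA T b A) ⬝ᵥ (Hb T b).mulVec (ansatzA T b A)
      = ((-(b ^ 2 / (b + 1)) - A ^ 2 * b / (b + 1) ^ (2 * T + 1) : ℝ) : ℂ) := by
  have hA2 := sq_mul_one_sub_inv_pow_of_eq_sqrt (by omega) hb hA
  refine ⟨?_, ⟨?_, hA ▸ sqrt_lt_add_one_of_two_le hT hb⟩, ?_⟩
  · rw [sum_norm_sq_ansatzA, sq_mul_sum_sq_inv_pow_eq_one hb hA2]
  · rw [hA, Real.sqrt_pos]
    exact div_pos (by positivity) (one_sub_inv_pow_pos (by linarith) (by omega))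
  · rw [star_dotProduct_Hb_mulVec_ansatzA (by omega) (by positivity), energy_eq_closed_form (by omega) hb hA2]
end
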